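/- Fix n ∈ ℕ, integers w and m, and a function f : (Fin n → Bool) → ℤ such that |f(S) − f(S')| = 1 for every pair of adjacent states S, S'. Suppose there exists a state S₀ with a(S₀) − b(S₀) = w and f(S₀) ≡ m + n (mod 2). Then for every state S, 3w + b(S) − a(S) + 2·f(S) ≡ 2m (mod 4). -/

import Mathlib

/-!
The quantity `b(S) + f(S)` changes by `±1 ± 1` when one smoothing is switched, so its parity is
the same for all states. Evaluating it at `S₀` and using `a + b = n`, the congruence mod 4 reduces
to that parity statement after dividing by 2.
-/

open Finset

/-- `a(S)`: the number of `A`-smoothings (coordinates where `S` is `false`). -/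
def aCount {n : ℕ} (S : Fin n → Bool) : ℕ := (Finset.univ.filter fun i => S i = false).card

/-- `b(S)`: the number of `B`-smoothings (coordinates where `S` is `true`). -/
def bCount {n : ℕ} (S : Fin n → Bool) : ℕ := (Finset.univ.filter fun i => S i = true).card

/-- Two states are adjacent if they differ in exactly one coordinate. -/
def Adjacent {n : ℕ} (S S' : Fin n → Bool) : Prop :=
  ∃ i : Fin n, S' = Function.update S i (!(S i))

theorem apply_eq_apply_of_forall_update_not {ι α : Type*} [Fintype ι] [DecidableEq ι]
    (g : (ι → Bool) → α) (hg : ∀ S i, g (Function.update S i (!(S i))) = g S)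
    (S S' : ι → Bool) : g S = g S' := by
  suffices key : ∀ s : Finset ι, ∀ S S' : ι → Bool, (∀ i ∉ s, S i = S' i) → g S = g S' from
    key univ S S' (by simp)
  intro s
  induction s using Finset.induction_on with
  | empty => exact fun S S' h => congrArg g (funext fun i => h i (notMem_empty i))
  | insert a s _ ih =>
    intro S S' h
    have hT : g (Function.update S a (S' a)) = g S := by
      by_cases ha : S' a = S a
      · rw [ha, Function.update_eq_self]
      · rw [show S' a = !(S a) by cases h : S a <;> simp_all, hg]
    refine hT.symm.trans (ih _ _ fun i hi => ?_)
    by_cases hia : i = a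
    · simp [hia]
    · simpa [Function.update_of_ne hia] using h i (by simp [hia, hi])

theorem aCount_add_bCount {n : ℕ} (S : Fin n → Bool) : aCount S + bCount S = n := by
  have := card_filter_add_card_filter_not (s := univ) fun i => S i = true
  simpa [aCount, bCount, add_comm] using this

theorem bCount_update_not {n : ℕ} (S : Fin n → Bool) (i : Fin n) :
    (bCount (Function.update S i (!(S i))) : ℤ) = bCount S + if S i then -1 else 1 := by
  unfold bCount
  cases hi : S i
  · have : (univ.filter fun j => Function.update S i true j = true)
        = insert i (univ.filter fun j => S j = true) := by
      ext j; by_cases hj : j = i <;> simp [hj, Function.update_of_ne, hi]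
    rw [Bool.not_false, this, card_insert_of_notMem (by simp [hi])]
    simp
  · have : (univ.filter fun j => Function.update S i false j = true)
        = (univ.filter fun j => S j = true).erase i := by
      ext j; by_cases hj : j = i <;> simp [hj, Function.update_of_ne, hi]
    rw [Bool.not_true, this, card_erase_of_mem (by simp [hi])]
    have : 0 < (univ.filter fun j => S j = true).card := card_pos.mpr ⟨i, by simp [hi]⟩
    simp only [if_pos]; omega

theorem Int.modEq_add_one_of_abs_sub_eq_one {a b : ℤ} (h : |a - b| = 1) : a ≡ b + 1 [ZMOD 2] := by
  rcases abs_eq zero_le_one |>.mp h with h | h <;> (unfold Int.ModEq; omega)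

theorem bCount_add_modEq_of_adjacent {n : ℕ} (f : (Fin n → Bool) → ℤ)
    (hf : ∀ S S' : Fin n → Bool, Adjacent S S' → |f S - f S'| = 1) (S S' : Fin n → Bool) :
    (bCount S : ℤ) + f S ≡ bCount S' + f S' [ZMOD 2] := by
  refine apply_eq_apply_of_forall_update_not (fun S => ((bCount S : ℤ) + f S) % 2)
    (fun S i => ?_) S S'
  have hb := bCount_update_not S i
  have hfi := Int.modEq_add_one_of_abs_sub_eq_one (hf S _ ⟨i, rfl⟩)
  unfold Int.ModEq at hfi
  split_ifs at hb <;> omega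

/-- computational core of Proposition 4.8: if `f` changes by exactly `±1`
under switching one smoothing, and some state `S₀` satisfies `a(S₀) - b(S₀) = w` and
`f(S₀) ≡ m + n (mod 2)`, then `3w + b(S) - a(S) + 2·f(S) ≡ 2m (mod 4)` for every state `S`. -/
theorem state_sum_congruence (n : ℕ) (w m : ℤ) (f : (Fin n → Bool) → ℤ)
    (hf : ∀ S S' : Fin n → Bool, Adjacent S S' → |f S - f S'| = 1)
    (h0 : ∃ S₀ : Fin n → Bool,
      (aCount S₀ : ℤ) - (bCount S₀ : ℤ) = w ∧ f S₀ ≡ m + (n : ℤ) [ZMOD 2]) :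
    ∀ S : Fin n → Bool,
      3 * w + (bCount S : ℤ) - (aCount S : ℤ) + 2 * f S ≡ 2 * m [ZMOD 4] := by
  obtain ⟨S₀, hw, hm⟩ := h0
  intro S
  have hS : (aCount S : ℤ) + bCount S = n := by exact_mod_cast aCount_add_bCount S
  have hS₀ : (aCount S₀ : ℤ) + bCount S₀ = n := by exact_mod_cast aCount_add_bCount S₀
  have hpar := bCount_add_modEq_of_adjacent f hf S S₀
  unfold Int.ModEq at hpar hm ⊢
  omega
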